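/- arXiv:math/0201237 — 3 statements merged into one kernel-verified Lean document; each statement's English description precedes it below -/
import Mathlib

section
/- Suppose a sequence $0<\nu_1<\nu_2<\cdots$ of positive reals satisfies the gap condition $\nu_m^2-\nu_{m-1}^2\ge \alpha\,\nu_m$ for all sufficiently large $m$ (for some $\alpha>0$), and there is a constant $c>0$ with $\nu_m\ge c\, m$ for large $m$. Then for $j<m-1$ (with $m$ large) one has $(\nu_m^2-\nu_j^2)^{-1/2} \le (\alpha(\nu_{j+1}+\cdots+\nu_m)/\nu_m)^{-1/2}\cdot 1$, and in particular $\sum_{j=1}^{m-2} \frac{2\alpha\nu_m}{(\nu_m^2-\nu_j^2)^{1/2}}\, j^{n-2} = O(\nu_m^{n-1})$ as $m\to\infty$, for any fixed integer $n\ge 2$. -/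
/-!
The gap condition gives `ν_k - ν_{k-1} ≥ α/2` for large `k`, hence `ν_m - ν_j ≥ α (m - j)/4`
for all `j ≤ m` once `m` is large, and so `ν_m² - ν_j² ≥ (ν_m - ν_j) ν_m ≥ α (m - j) ν_m / 4`.
Since `ν_{j+1} + ⋯ + ν_m ≤ (m - j) ν_m`, this gives the first claim as soon as `ν_m ≥ 4`.
For the sum, each term is at most `4 √(α ν_m) m^{n-2} / √(m - j)`, and
`∑_{j < m} (m - j)^{-1/2} ≤ 2 √m`; linear growth `m ≤ ν_m / c` turns `√(ν_m) m^{n-2} √m`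
into `O(ν_m^{n-1})`.
-/

open Finset Filter

lemma half_le_sub_of_mul_le_sq_sub_sq {α a b : ℝ} (ha : 0 < a) (hba : b ≤ a)
    (h : α * a ≤ a ^ 2 - b ^ 2) : α / 2 ≤ a - b := by
  nlinarith

lemma sum_range_inv_sqrt_succ_le (m : ℕ) : ∑ i ∈ range m, (√((i : ℝ) + 1))⁻¹ ≤ 2 * √m := by
  induction m with
  | zero => simp
  | succ m ih =>
    set s := √((m : ℝ) + 1)
    set t := √(m : ℝ)
    have hs : 0 < s := Real.sqrt_pos.2 (by positivity)
    have hs2 : s ^ 2 = m + 1 := Real.sq_sqrt (by positivity)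
    have ht2 : t ^ 2 = m := Real.sq_sqrt (by positivity)
    -- `s t ≤ (s² + t²)/2 = m + 1/2`
    have hstep : s⁻¹ ≤ 2 * s - 2 * t := by
      rw [inv_le_iff_one_le_mul₀ hs]
      nlinarith [sq_nonneg (s - t)]
    rw [sum_range_succ]
    push_cast
    linarith

lemma sum_range_inv_sqrt_sub_le (m : ℕ) : ∑ j ∈ range m, (√((m : ℝ) - j))⁻¹ ≤ 2 * √m := by
  calc ∑ j ∈ range m, (√((m : ℝ) - j))⁻¹ = ∑ i ∈ range m, (√((i : ℝ) + 1))⁻¹ := by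
        rw [← sum_range_reflect]
        refine sum_congr rfl fun j hj => ?_
        have hjm := mem_range.1 hj
        rw [Nat.cast_sub (by omega), Nat.cast_sub (by omega)]
        push_cast
        ring_nf
    _ ≤ 2 * √m := sum_range_inv_sqrt_succ_le m

lemma mul_div_sqrt_le {α v x w : ℝ} (hα : 0 < α) (hv : 0 < v) (hx : 0 < x)
    (h : α / 4 * x * v ≤ w) : 2 * α * v / √w ≤ 4 * √(α * v) * (√x)⁻¹ := by
  set s := √(α * v)
  set t := √x
  have hs : 0 < s := Real.sqrt_pos.2 (by positivity)
  have ht : 0 < t := Real.sqrt_pos.2 hx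
  have hs2 : s ^ 2 = α * v := Real.sq_sqrt (by positivity)
  have ht2 : t ^ 2 = x := Real.sq_sqrt hx.le
  have hw : s * t / 2 ≤ √w := Real.le_sqrt_of_sq_le (by nlinarith)
  calc 2 * α * v / √w = 2 * s ^ 2 / √w := by rw [hs2]; ring
    _ ≤ 2 * s ^ 2 / (s * t / 2) := by gcongr
    _ = 4 * s * t⁻¹ := by field_simp; ring

lemma sum_mul_div_sqrt_le {α c v : ℝ} {w : ℕ → ℝ} {m : ℕ} (k : ℕ) (hα : 0 < α) (hc : 0 < c)
    (hv : 0 < v) (hcm : c * m ≤ v) (hw : ∀ j < m, α / 4 * (m - j) * v ≤ w j) :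
    ∑ j ∈ Icc 1 (m - 2), 2 * α * v / √(w j) * (j : ℝ) ^ k ≤
      8 * √(α / c) / c ^ k * v ^ (k + 1) := by
  have hmv : (m : ℝ) ≤ v / c := (le_div_iff₀' hc).2 hcm
  have hsqrt : √(α * v) * √m ≤ v * √(α / c) :=
    calc √(α * v) * √m = √(α * v * m) := (Real.sqrt_mul (by positivity) _).symm
      _ ≤ √(v ^ 2 * (α / c)) := Real.sqrt_le_sqrt (by
          calc α * v * m ≤ α * v * (v / c) := by gcongr
            _ = v ^ 2 * (α / c) := by ring)
      _ = v * √(α / c) := by rw [Real.sqrt_mul (sq_nonneg v), Real.sqrt_sq hv.le]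
  calc ∑ j ∈ Icc 1 (m - 2), 2 * α * v / √(w j) * (j : ℝ) ^ k
      ≤ ∑ j ∈ Icc 1 (m - 2), 4 * √(α * v) * (√((m : ℝ) - j))⁻¹ * (m : ℝ) ^ k := by
        refine sum_le_sum fun j hj => ?_
        have hjm : j < m := by have := mem_Icc.1 hj; omega
        have hx : (0 : ℝ) < m - j := sub_pos.2 (by exact_mod_cast hjm)
        gcongr
        exact mul_div_sqrt_le hα hv hx (hw j hjm)
    _ ≤ ∑ j ∈ range m, 4 * √(α * v) * (√((m : ℝ) - j))⁻¹ * (m : ℝ) ^ k :=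
        sum_le_sum_of_subset_of_nonneg (fun j hj => mem_range.2 (by have := mem_Icc.1 hj; omega))
          fun _ _ _ => by positivity
    _ = 4 * √(α * v) * (∑ j ∈ range m, (√((m : ℝ) - j))⁻¹) * (m : ℝ) ^ k := by
        rw [← sum_mul, ← mul_sum]
    _ ≤ 4 * √(α * v) * (2 * √m) * (m : ℝ) ^ k := by
        gcongr
        exact sum_range_inv_sqrt_sub_le m
    _ = 8 * (√(α * v) * √m) * (m : ℝ) ^ k := by ring
    _ ≤ 8 * (v * √(α / c)) * (v / c) ^ k := by gcongr
    _ = 8 * √(α / c) / c ^ k * v ^ (k + 1) := by rw [div_pow]; field_simp; ring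

lemma sum_Icc_succ_le_mul_of_monotone {ν : ℕ → ℝ} (hmono : Monotone ν) {j m : ℕ} (hjm : j ≤ m) :
    ∑ k ∈ Icc (j + 1) m, ν k ≤ (m - j) * ν m := by
  have h := sum_le_card_nsmul (Icc (j + 1) m) ν (ν m) fun k hk => hmono (mem_Icc.1 hk).2
  rwa [Nat.card_Icc, Nat.add_sub_add_right, nsmul_eq_mul, Nat.cast_sub hjm] at h

section GapCondition

variable {ν : ℕ → ℝ} {α : ℝ} {M : ℕ}

lemma half_mul_le_sub_of_gap (hpos : ∀ m, 0 < ν m) (hmono : Monotone ν)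
    (hgap : ∀ m ≥ M, α * ν m ≤ ν m ^ 2 - ν (m - 1) ^ 2) {j m : ℕ} (hj : M ≤ j + 1)
    (hjm : j ≤ m) : α / 2 * (m - j) ≤ ν m - ν j := by
  induction m, hjm using Nat.le_induction with
  | base => simp
  | succ m hjm ih =>
    have hstep := half_le_sub_of_mul_le_sq_sub_sq (hpos _) (hmono m.le_succ)
      (hgap (m + 1) (by omega))
    push_cast
    linarith

lemma quarter_mul_le_sub_of_gap (hα : 0 ≤ α) (hpos : ∀ m, 0 < ν m) (hmono : Monotone ν)
    (hgap : ∀ m ≥ M, α * ν m ≤ ν m ^ 2 - ν (m - 1) ^ 2) {j m : ℕ} (hm : 2 * M ≤ m)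
    (hjm : j ≤ m) : α / 4 * (m - j) ≤ ν m - ν j := by
  have hjm' : (j : ℝ) ≤ m := by exact_mod_cast hjm
  by_cases hj : M ≤ j + 1
  · have := half_mul_le_sub_of_gap hpos hmono hgap hj hjm
    nlinarith
  · have hM := half_mul_le_sub_of_gap hpos hmono hgap (j := M) (m := m) (by omega) (by omega)
    have hνj : ν j ≤ ν M := hmono (by omega)
    have hm' : 2 * (M : ℝ) ≤ m := by exact_mod_cast hm
    nlinarith [mul_nonneg hα (sub_nonneg.2 hm'), mul_nonneg hα (Nat.cast_nonneg (α := ℝ) j)]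

lemma quarter_mul_le_sq_sub_sq_of_gap (hα : 0 ≤ α) (hpos : ∀ m, 0 < ν m) (hmono : Monotone ν)
    (hgap : ∀ m ≥ M, α * ν m ≤ ν m ^ 2 - ν (m - 1) ^ 2) {j m : ℕ} (hm : 2 * M ≤ m)
    (hjm : j ≤ m) : α / 4 * (m - j) * ν m ≤ ν m ^ 2 - ν j ^ 2 := by
  have h := quarter_mul_le_sub_of_gap hα hpos hmono hgap hm hjm
  have hνj : ν j ≤ ν m := hmono hjm
  nlinarith [hpos j, hpos m]

end GapCondition

/-- For a strictly increasing positive sequence `ν` with the gap condition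
`ν_m² - ν_{m-1}² ≥ α ν_m` and linear growth `ν_m ≥ c m` (both for large `m`):
for large `m` and `j < m - 1` one has
`(ν_m² - ν_j²)^{-1/2} ≤ (α (ν_{j+1} + ⋯ + ν_m)/ν_m)^{-1/2}`, and
`∑_{j=1}^{m-2} 2α ν_m (ν_m² - ν_j²)^{-1/2} j^{n-2} = O(ν_m^{n-1})`. -/
theorem gap_sequence_sum_bound (ν : ℕ → ℝ) (α c : ℝ) (n : ℕ) (hn : 2 ≤ n)
    (hα : 0 < α) (hc : 0 < c)
    (hpos : ∀ m, 0 < ν m) (hmono : StrictMono ν)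
    (hgap : ∃ M, ∀ m ≥ M, α * ν m ≤ ν m ^ 2 - ν (m - 1) ^ 2)
    (hlin : ∃ M, ∀ m ≥ M, c * m ≤ ν m) :
    (∃ M, ∀ m ≥ M, ∀ j, j < m - 1 →
      (ν m ^ 2 - ν j ^ 2) ^ (-(1/2) : ℝ) ≤
        (α * (∑ k ∈ Finset.Icc (j + 1) m, ν k) / ν m) ^ (-(1/2) : ℝ)) ∧
    (∃ C M, ∀ m ≥ M,
      ∑ j ∈ Finset.Icc 1 (m - 2),
          2 * α * ν m / Real.sqrt (ν m ^ 2 - ν j ^ 2) * (j : ℝ) ^ (n - 2) ≤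
        C * ν m ^ (n - 1)) := by
  obtain ⟨M, hgap⟩ := hgap
  obtain ⟨M', hlin⟩ := hlin
  have hlarge : ∀ᶠ m : ℕ in atTop, 2 * M ≤ m ∧ c * m ≤ ν m ∧ 4 ≤ ν m := by
    filter_upwards [eventually_ge_atTop (2 * M), eventually_ge_atTop M',
      (tendsto_natCast_atTop_atTop.const_mul_atTop hc).eventually_ge_atTop 4] with m h2M hM' h4
    exact ⟨h2M, hlin m hM', h4.trans (hlin m hM')⟩
  obtain ⟨N, hN⟩ := eventually_atTop.1 hlarge
  have hlower {m j : ℕ} (hm : N ≤ m) (hjm : j ≤ m) : α / 4 * (m - j) * ν m ≤ ν m ^ 2 - ν j ^ 2 :=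
    quarter_mul_le_sq_sub_sq_of_gap hα.le hpos hmono.monotone hgap (hN m hm).1 hjm
  refine ⟨⟨N, fun m hm j hj => ?_⟩, ⟨8 * √(α / c) / c ^ (n - 2), N, fun m hm => ?_⟩⟩
  · have hS : 0 < ∑ k ∈ Icc (j + 1) m, ν k :=
      sum_pos (fun k _ => hpos k) (nonempty_Icc.2 (by omega))
    have hjm : (j : ℝ) ≤ m := by exact_mod_cast (by omega : j ≤ m)
    refine Real.rpow_le_rpow_of_nonpos (div_pos (mul_pos hα hS) (hpos m)) ?_ (by norm_num)
    calc α * (∑ k ∈ Icc (j + 1) m, ν k) / ν m ≤ α * (m - j) := by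
          rw [div_le_iff₀ (hpos m), mul_assoc]
          gcongr
          exact sum_Icc_succ_le_mul_of_monotone hmono.monotone (by omega)
      _ ≤ α / 4 * (m - j) * ν m := by
          nlinarith [mul_nonneg (mul_nonneg hα.le (sub_nonneg.2 hjm)) (sub_nonneg.2 (hN m hm).2.2)]
      _ ≤ ν m ^ 2 - ν j ^ 2 := hlower hm (by omega)
  · obtain ⟨k, rfl⟩ : ∃ k, n = k + 2 := ⟨n - 2, by omega⟩
    exact sum_mul_div_sqrt_le k hα hc (hpos m) (hN m hm).2.1 fun j hj => hlower hm hj.le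
end

section
/- Let $H$ be a Hilbert space, $z\mapsto K(z)$ a family of compact operators depending holomorphically on $z$ in a connected open set $U$, and suppose $I+K(z_0)$ is invertible for some $z_0\in U$. Then the set of $z\in U$ at which $I+K(z)$ fails to be invertible is discrete in $U$, and for $z$ near $z_0$ the invertibility of $I+K(z)$ is equivalent to the invertibility of $I+(I+K(z_0))^{-1}(K(z)-K(z_0))$. -/
open Filter Topology Metric Set

/-!
Near a point `w ∈ U`, approximate the compact operator `K w` within `1/2` by an operator `F`
factoring through a finite-dimensional subspace `E`. For `z` near `w` the operator
`1 + (K z - F)` is then invertible, and since `1 + AB` is invertible iff `1 + BA` is, the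
invertibility of `1 + K z = (1 + (K z - F)) + F` is equivalent to the nonvanishing of the
determinant of an operator on `E` depending holomorphically on `z`. By the principle of isolated
zeros, the non-invertible points near `w` either fill a neighbourhood of `w` or are isolated.
The points of `U` of the second kind form a subset of `U` that is open and relatively closed, and it
contains `z₀`, so it is all of `U`. The second claim is the factorisation
`1 + K z = (1 + K z₀) (1 + (1 + K z₀)⁻¹ (K z - K z₀))`.
-/

theorem IsPreconnected.eventually_nhdsNE_of_forall_or {X : Type*} [TopologicalSpace X]
    {U : Set X} {P : X → Prop} (hUc : IsPreconnected U) (hUo : IsOpen U)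
    (hP : ∀ x ∈ U, (∀ᶠ y in 𝓝 x, ¬P y) ∨ ∀ᶠ y in 𝓝[≠] x, P y) {x₀ : X} (hx₀ : x₀ ∈ U)
    (hPx₀ : P x₀) : ∀ x ∈ U, ∀ᶠ y in 𝓝[≠] x, P y := by
  have of_mem_closure : ∀ x ∈ U, x ∈ closure {y | P y} → ∀ᶠ y in 𝓝[≠] x, P y := fun x hx hcl =>
    (hP x hx).resolve_left (mem_closure_iff_frequently.1 hcl)
  have hsub : U ⊆ U ∩ closure {y | P y} := by
    refine hUc.subset_of_closure_inter_subset ?_ ⟨x₀, hx₀, hx₀, subset_closure hPx₀⟩ ?_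
    · refine isOpen_iff_mem_nhds.2 fun x ⟨hxU, hxcl⟩ => inter_mem (hUo.mem_nhds hxU) ?_
      rw [← nhdsNE_sup_pure]
      exact mem_sup.2
        ⟨mem_of_superset (of_mem_closure x hxU hxcl) fun y hy => subset_closure hy, hxcl⟩
    · exact fun x ⟨hx, hxU⟩ =>
        ⟨hxU, isClosed_closure.closure_subset_iff.2 inter_subset_right hx⟩
  exact fun x hx => of_mem_closure x hx (hsub hx).2

theorem AnalyticAt.eventually_not_or_eventually_nhdsNE {𝕜 E : Type*} [NontriviallyNormedField 𝕜]
    [NormedAddCommGroup E] [NormedSpace 𝕜 E] {f : 𝕜 → E} {x : 𝕜} {P : 𝕜 → Prop}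
    (hf : AnalyticAt 𝕜 f x) (hP : ∀ᶠ y in 𝓝 x, P y ↔ f y ≠ 0) :
    (∀ᶠ y in 𝓝 x, ¬P y) ∨ ∀ᶠ y in 𝓝[≠] x, P y := by
  rcases hf.eventually_eq_zero_or_eventually_ne_zero with h | h
  · exact .inl <| by filter_upwards [hP, h] with y hy h0 using by simp [hy, h0]
  · exact .inr <| by filter_upwards [nhdsWithin_le_nhds hP, h] with y hy h0 using hy.2 h0

theorem isUnit_add_iff_isUnit_one_add_inv_mul {R : Type*} [Ring R] (u : Rˣ) (a : R) :
    IsUnit (↑u + a) ↔ IsUnit (1 + ↑u⁻¹ * a) := by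
  rw [← Units.isUnit_units_mul u (1 + _), mul_add, mul_one, Units.mul_inv_cancel_left]

section CompComm

variable {R M N : Type*} [Ring R] [TopologicalSpace M] [AddCommGroup M] [Module R M]
  [IsTopologicalAddGroup M] [TopologicalSpace N] [AddCommGroup N] [Module R N]
  [IsTopologicalAddGroup N]

theorem ContinuousLinearMap.isUnit_one_add_comp_of_isUnit_one_add_comp {A : M →L[R] N}
    {B : N →L[R] M} (h : IsUnit (1 + A ∘L B)) : IsUnit (1 + B ∘L A) := by
  obtain ⟨u, hu⟩ := h
  set v : N →L[R] N := ↑u⁻¹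
  have right_inv (y : N) : v y + A (B (v y)) = y := by
    simpa [hu] using congr($(u.mul_inv) y)
  have left_inv (y : N) : v y + v (A (B y)) = y := by
    simpa [hu] using congr($(u.inv_mul) y)
  refine isUnit_iff_exists.2 ⟨1 - B ∘L v ∘L A, ?_, ?_⟩ <;> ext x
  · have := congr(B $(right_inv (A x)))
    rw [map_add] at this
    simp [← this]
  · have := congr(B $(left_inv (A x)))
    rw [map_add] at this
    simp [this]

theorem ContinuousLinearMap.isUnit_one_add_comp_comm (A : M →L[R] N) (B : N →L[R] M) :
    IsUnit (1 + A ∘L B) ↔ IsUnit (1 + B ∘L A) :=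
  ⟨isUnit_one_add_comp_of_isUnit_one_add_comp, isUnit_one_add_comp_of_isUnit_one_add_comp⟩

end CompComm

theorem ContinuousLinearMap.isUnit_iff_det_ne_zero {𝕜 E : Type*} [NontriviallyNormedField 𝕜]
    [CompleteSpace 𝕜] [NormedAddCommGroup E] [NormedSpace 𝕜 E] [FiniteDimensional 𝕜 E]
    (T : E →L[𝕜] E) : IsUnit T ↔ T.det ≠ 0 := by
  rw [← isUnit_iff_ne_zero, ContinuousLinearMap.det, ← LinearMap.isUnit_iff_isUnit_det]
  exact (isUnit_map_iff (Module.End.toContinuousLinearMap E).symm T).symm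

theorem ContinuousLinearMap.differentiable_det {𝕜 E : Type*} [NontriviallyNormedField 𝕜]
    [CompleteSpace 𝕜] [NormedAddCommGroup E] [NormedSpace 𝕜 E] [FiniteDimensional 𝕜 E] :
    Differentiable 𝕜 fun T : E →L[𝕜] E => T.det := by
  classical
  set b := Module.finBasis 𝕜 E
  have h : (fun T : E →L[𝕜] E => T.det) = fun T => ∑ σ : Equiv.Perm (Fin _),
      (Equiv.Perm.sign σ : 𝕜) *
        ∏ i, LinearMap.toContinuousLinearMap (b.coord (σ i)) (T (b i)) := by
    ext T
    rw [ContinuousLinearMap.det, ← LinearMap.det_toMatrix b, Matrix.det_apply]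
    simp [LinearMap.toMatrix_apply, Units.smul_def]
  rw [h]
  fun_prop

theorem ContinuousLinearMap.isUnit_add_comp_iff_det_ne_zero {𝕜 H E : Type*}
    [NontriviallyNormedField 𝕜] [CompleteSpace 𝕜] [NormedAddCommGroup H] [NormedSpace 𝕜 H]
    [NormedAddCommGroup E] [NormedSpace 𝕜 E] [FiniteDimensional 𝕜 E] (u : (H →L[𝕜] H)ˣ)
    (A : E →L[𝕜] H) (B : H →L[𝕜] E) :
    IsUnit (↑u + A ∘L B) ↔ (1 + B ∘L ↑u⁻¹ ∘L A).det ≠ 0 := by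
  rw [isUnit_add_iff_isUnit_one_add_inv_mul, ← isUnit_iff_det_ne_zero,
    ← isUnit_one_add_comp_comm]
  rfl

theorem IsCompactOperator.exists_finiteDimensional_norm_sub_subtypeL_comp_le
    {𝕜 G H : Type*} [RCLike 𝕜] [NormedAddCommGroup G] [NormedSpace 𝕜 G] [NormedAddCommGroup H]
    [InnerProductSpace 𝕜 H] {T : G →L[𝕜] H} (hT : IsCompactOperator T) {ε : ℝ} (hε : 0 < ε) :
    ∃ E : Submodule 𝕜 H, FiniteDimensional 𝕜 E ∧ ∃ F : G →L[𝕜] E, ‖T - E.subtypeL ∘L F‖ ≤ ε := by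
  obtain ⟨C, hC, hTC⟩ := IsCompactOperator.image_closedBall_subset_compact
    (f := (T : G →ₗ[𝕜] H)) hT 1
  obtain ⟨t, -, ht, hcover⟩ := finite_cover_balls_of_compact hC hε
  set E := Submodule.span 𝕜 t
  have : FiniteDimensional 𝕜 E := FiniteDimensional.span_of_finite 𝕜 ht
  refine ⟨E, this, E.orthogonalProjectionOnto ∘L T,
    ContinuousLinearMap.opNorm_le_of_unit_norm hε.le fun x hx => ?_⟩
  obtain ⟨c, hct, hc⟩ := mem_iUnion₂.1 (hcover (hTC ⟨x, by simp [hx], rfl⟩))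
  calc ‖(T - E.subtypeL ∘L E.orthogonalProjectionOnto ∘L T) x‖
      = ‖T x - E.starProjection (T x)‖ := rfl
    _ ≤ ‖T x - c‖ := by
      rw [Submodule.starProjection_minimal]
      exact ciInf_le ⟨0, forall_mem_range.2 fun _ => norm_nonneg _⟩
        (⟨c, Submodule.subset_span hct⟩ : E)
    _ ≤ ε := (mem_ball_iff_norm.1 hc).le

theorem exists_analyticAt_isUnit_one_add_iff_ne_zero {H : Type*} [NormedAddCommGroup H]
    [InnerProductSpace ℂ H] [CompleteSpace H] {K : ℂ → H →L[ℂ] H} {w : ℂ}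
    (hK : ∀ᶠ z in 𝓝 w, DifferentiableAt ℂ K z) (hKw : IsCompactOperator (K w)) :
    ∃ f : ℂ → ℂ, AnalyticAt ℂ f w ∧ ∀ᶠ z in 𝓝 w, (IsUnit (1 + K z) ↔ f z ≠ 0) := by
  obtain ⟨E, _, B, hB⟩ :=
    hKw.exists_finiteDimensional_norm_sub_subtypeL_comp_le (by norm_num : (0 : ℝ) < 1 / 2)
  set F := E.subtypeL ∘L B
  have hunit : ∀ᶠ z in 𝓝 w, IsUnit (1 + (K z - F)) := by
    filter_upwards [hK.self_of_nhds.continuousAt.eventually (ball_mem_nhds (K w) one_half_pos)]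
      with z hz
    have hsmall : ‖F - K z‖ < 1 := calc
      ‖F - K z‖ ≤ ‖F - K w‖ + ‖K w - K z‖ := norm_sub_le_norm_sub_add_norm_sub _ _ _
      _ < 1 / 2 + 1 / 2 := by
        rw [norm_sub_rev F, norm_sub_rev (K w) (K z), ← dist_eq_norm (K z)]
        exact add_lt_add_of_le_of_lt hB hz
      _ = 1 := by norm_num
    rw [show (1 : H →L[ℂ] H) + (K z - F) = 1 - (F - K z) by abel, ← Units.val_oneSub _ hsmall]
    exact Units.isUnit _
  refine ⟨fun z => (1 + B ∘L Ring.inverse (1 + (K z - F)) ∘L E.subtypeL).det, ?_, ?_⟩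
  · refine Complex.analyticAt_iff_eventually_differentiableAt.2 ?_
    filter_upwards [hK, hunit] with z hKz hz
    have hg : DifferentiableAt ℂ (fun z => Ring.inverse (1 + (K z - F))) z :=
      (hKz.sub_const F).const_add 1 |>.inverse hz
    exact ContinuousLinearMap.differentiable_det.differentiableAt.comp z
      (g := fun T : E →L[ℂ] E => T.det) (by fun_prop)
  · filter_upwards [hunit] with z hz
    rw [Ring.inverse_of_isUnit hz, ← ContinuousLinearMap.isUnit_add_comp_iff_det_ne_zero,
      hz.unit_spec, add_assoc, sub_add_cancel]

/-- Analytic Fredholm theory: if `z ↦ K(z)` is a holomorphic family of compact operators on a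
connected open set `U` and `I + K(z₀)` is invertible at some `z₀ ∈ U`, then the set of
`z ∈ U` where `I + K(z)` fails to be invertible is discrete in `U`, and near `z₀`
invertibility of `I + K(z)` is equivalent to invertibility of
`I + (I + K(z₀))⁻¹ (K(z) - K(z₀))`. -/
theorem analytic_fredholm {H : Type*} [NormedAddCommGroup H] [InnerProductSpace ℂ H]
    [CompleteSpace H] (U : Set ℂ) (hU : IsOpen U) (hUconn : IsConnected U)
    (K : ℂ → H →L[ℂ] H) (hK : DifferentiableOn ℂ K U)
    (hcompact : ∀ z ∈ U, IsCompactOperator (K z))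
    (z₀ : ℂ) (hz₀ : z₀ ∈ U) (hinv : IsUnit (1 + K z₀)) :
    (∀ w ∈ U, ∀ᶠ z in nhdsWithin w {w}ᶜ, z ∈ U → IsUnit (1 + K z)) ∧
    (∀ᶠ z in nhds z₀,
      (IsUnit (1 + K z) ↔
        IsUnit (1 + (↑hinv.unit⁻¹ : H →L[ℂ] H) * (K z - K z₀)))) := by
  refine ⟨fun w hw => ?_, .of_forall fun z => ?_⟩
  · have hdich (x : ℂ) (hx : x ∈ U) :
        (∀ᶠ z in 𝓝 x, ¬IsUnit (1 + K z)) ∨ ∀ᶠ z in 𝓝[≠] x, IsUnit (1 + K z) := by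
      have hKx : ∀ᶠ z in 𝓝 x, DifferentiableAt ℂ K z :=
        (hU.eventually_mem hx).mono fun z hz => hK.differentiableAt (hU.mem_nhds hz)
      obtain ⟨f, hf, hKf⟩ := exists_analyticAt_isUnit_one_add_iff_ne_zero hKx (hcompact x hx)
      exact hf.eventually_not_or_eventually_nhdsNE hKf
    exact (hUconn.isPreconnected.eventually_nhdsNE_of_forall_or hU hdich hz₀ hinv w hw).mono
      fun _ h _ => h
  · rw [show 1 + K z = ↑hinv.unit + (K z - K z₀) by rw [hinv.unit_spec]; abel]
    exact isUnit_add_iff_isUnit_one_add_inv_mul _ _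
end

section
/- If a sequence of positive reals $(\nu_m)$ satisfies the Weyl-type two-sided bound $c_1 m \le \nu_m \le c_2 m$ for large $m$ (some $c_1,c_2>0$) and $M_m$ denotes multiplicities with $M_m \le C m^{n-2}$, then $\sum_{j=1}^{m} M_j \cdot \min\big(\sqrt{\alpha\nu_m},\, 2\alpha\nu_m(\nu_m^2-\nu_j^2)^{-1/2}\big) = O(m^{n-1})$ as $m\to\infty$, provided additionally $\nu_m^2-\nu_{m-1}^2\ge\alpha\nu_m$ for large $m$. -/
/-!
Split the sum at `ν j = ν m / 2`. Below it, `ν m ² - ν j ² ≥ 3/4 · ν m ²`, so each term is at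
most `3α`. Above it, every `k ∈ (j, m]` has `ν k > ν m / 2`, so (for `m` large, `k` is then large
too) the gap condition telescopes to `ν m ² - ν j ² ≥ (m - j) · α ν m / 2`, and the term is at most
`4 √(α ν m) / √(m - j + 1)`. Since `∑_{d ≤ m} d^{-1/2} ≤ 2 √m`, `M j ≤ C m^{n-2}` and
`ν m ≤ c₂ m`, the sum is at most `C (3α + 8 √(α c₂)) m^{n-1}`.
-/

open Finset Filter

noncomputable def clippedWeight (α : ℝ) (ν : ℕ → ℝ) (m j : ℕ) : ℝ :=
  if j = m then √(α * ν m) else min √(α * ν m) (2 * α * ν m / √(ν m ^ 2 - ν j ^ 2))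

theorem nsmul_le_sub_of_le_sub_pred {G : Type*} [AddCommGroup G] [PartialOrder G]
    [IsOrderedAddMonoid G] {f : ℕ → G} {g : G} {j m : ℕ} (hjm : j ≤ m)
    (h : ∀ k, j < k → k ≤ m → g ≤ f k - f (k - 1)) : (m - j) • g ≤ f m - f j := by
  induction m, hjm using Nat.le_induction with
  | base => simp
  | succ m hjm ih =>
    have hlast := h (m + 1) (by omega) le_rfl
    rw [Nat.add_sub_cancel] at hlast
    rw [Nat.sub_add_comm hjm, succ_nsmul]
    calc (m - j) • g + g ≤ (f m - f j) + (f (m + 1) - f m) :=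
          add_le_add (ih fun k hjk hkm => h k hjk (by omega)) hlast
      _ = f (m + 1) - f j := by abel

theorem sum_Icc_one_div_sqrt_le (m : ℕ) : ∑ d ∈ Icc 1 m, 1 / √(d : ℝ) ≤ 2 * √(m : ℝ) := by
  induction m with
  | zero => simp
  | succ m ih =>
    rw [sum_Icc_succ_top (by omega)]
    have hlt : (0 : ℝ) < √((m : ℝ) + 1) := Real.sqrt_pos.2 (by positivity)
    -- `1 / √(m+1) ≤ 2 / (√(m+1) + √m) = 2√(m+1) - 2√m`
    have hstep : 1 / √((m : ℝ) + 1) ≤ 2 * √((m : ℝ) + 1) - 2 * √(m : ℝ) := by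
      rw [div_le_iff₀ hlt]
      nlinarith [Real.sqrt_le_sqrt (by linarith : (m : ℝ) ≤ m + 1), Real.sqrt_nonneg (m : ℝ),
        Real.sq_sqrt (by positivity : (0 : ℝ) ≤ m), Real.sq_sqrt (by positivity : (0 : ℝ) ≤ m + 1)]
    push_cast
    linarith

theorem sum_Icc_one_div_sqrt_reflect_le (m : ℕ) :
    ∑ j ∈ Icc 1 m, 1 / √((m - j + 1 : ℕ) : ℝ) ≤ 2 * √(m : ℝ) := by
  have hreflect : ∑ j ∈ Icc 1 m, 1 / √((m - j + 1 : ℕ) : ℝ) = ∑ d ∈ Icc 1 m, 1 / √(d : ℝ) :=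
    sum_nbij' (fun j => m - j + 1) (fun d => m - d + 1)
      (fun j hj => by rw [mem_Icc] at hj ⊢; omega) (fun d hd => by rw [mem_Icc] at hd ⊢; omega)
      (fun j hj => by rw [mem_Icc] at hj; omega) (fun d hd => by rw [mem_Icc] at hd; omega)
      (fun _ _ => rfl)
  exact hreflect ▸ sum_Icc_one_div_sqrt_le m

theorem two_mul_div_sqrt_sq_sub_sq_le {α a b : ℝ} (hα : 0 ≤ α) (hb : 0 ≤ b) (hba : 2 * b ≤ a) :
    2 * α * a / √(a ^ 2 - b ^ 2) ≤ 3 * α := by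
  rcases (show 0 ≤ a by linarith).eq_or_lt with ha | ha
  · simpa [← ha] using hα
  have hroot : 2 / 3 * a ≤ √(a ^ 2 - b ^ 2) := Real.le_sqrt_of_sq_le (by nlinarith)
  rw [div_le_iff₀ (by linarith)]
  nlinarith

theorem two_mul_div_sqrt_le {α a x t : ℝ} (hαa : 0 ≤ α * a) (ht : 0 < t)
    (h : α * a * t ≤ 4 * x) : 2 * α * a / √x ≤ 4 * √(α * a) / √t := by
  rcases le_or_gt x 0 with hx | hx
  · rw [Real.sqrt_eq_zero'.2 hx, div_zero]
    positivity
  rw [div_le_div_iff₀ (Real.sqrt_pos.2 hx) (Real.sqrt_pos.2 ht)]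
  have hroot : √(α * a) * √t ≤ 2 * √x := by
    rw [← Real.sqrt_mul hαa, Real.sqrt_le_iff, mul_pow, Real.sq_sqrt hx.le]
    exact ⟨by positivity, by linarith⟩
  calc 2 * α * a * √t = 2 * √(α * a) * (√(α * a) * √t) := by
        linear_combination (-2 * √t) * Real.mul_self_sqrt hαa
    _ ≤ 2 * √(α * a) * (2 * √x) := by gcongr
    _ = 4 * √(α * a) * √x := by ring

section clippedWeight

variable {α : ℝ} {ν : ℕ → ℝ} {m j : ℕ}

theorem clippedWeight_nonneg (hα : 0 ≤ α) (hν : 0 ≤ ν m) : 0 ≤ clippedWeight α ν m j := by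
  unfold clippedWeight
  split_ifs <;> positivity

theorem clippedWeight_le (hα : 0 < α) (hpos : ∀ k, 0 < ν k) (hmono : Monotone ν) (hjm : j ≤ m)
    (hgap : ∀ k, ν m < 2 * ν k → α * ν k ≤ ν k ^ 2 - ν (k - 1) ^ 2) :
    clippedWeight α ν m j ≤ 3 * α + 4 * √(α * ν m) / √((m - j + 1 : ℕ) : ℝ) := by
  have hαν : 0 ≤ α * ν m := by have := hpos m; positivity
  unfold clippedWeight
  split_ifs with hj
  · subst hj
    simp only [Nat.sub_self, zero_add, Nat.cast_one, Real.sqrt_one, div_one]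
    nlinarith [Real.sqrt_nonneg (α * ν j)]
  rcases le_or_gt (2 * ν j) (ν m) with hsmall | hlarge
  · exact (min_le_right _ _).trans <| (two_mul_div_sqrt_sq_sub_sq_le hα.le (hpos j).le hsmall).trans
      (le_add_of_nonneg_right (by positivity))
  have htel : (m - j) • (α * ν m / 2) ≤ ν m ^ 2 - ν j ^ 2 :=
    nsmul_le_sub_of_le_sub_pred (f := fun k => ν k ^ 2) hjm fun k hjk _ =>
      have hνk := hmono hjk.le
      calc α * ν m / 2 ≤ α * ν k := by nlinarith
        _ ≤ ν k ^ 2 - ν (k - 1) ^ 2 := hgap k (by linarith)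
  have hd : (1 : ℝ) ≤ ((m - j : ℕ) : ℝ) := by exact_mod_cast (by omega : 1 ≤ m - j)
  rw [nsmul_eq_mul] at htel
  refine (min_le_right _ _).trans <| (two_mul_div_sqrt_le hαν (by positivity) ?_).trans
    (le_add_of_nonneg_left (by positivity))
  push_cast
  nlinarith

theorem sum_mul_clippedWeight_le {C : ℝ} {M : ℕ → ℕ} {p : ℕ} (hα : 0 < α) (hC : 0 ≤ C)
    (hpos : ∀ k, 0 < ν k) (hmono : Monotone ν)
    (hgap : ∀ k, ν m < 2 * ν k → α * ν k ≤ ν k ^ 2 - ν (k - 1) ^ 2)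
    (hM : ∀ j ≤ m, (M j : ℝ) ≤ C * (m : ℝ) ^ p) :
    ∑ j ∈ Icc 1 m, (M j : ℝ) * clippedWeight α ν m j ≤
      C * (m : ℝ) ^ p * (3 * α * m + 8 * √(α * ν m) * √(m : ℝ)) := by
  calc ∑ j ∈ Icc 1 m, (M j : ℝ) * clippedWeight α ν m j
      ≤ ∑ j ∈ Icc 1 m, C * (m : ℝ) ^ p * (3 * α + 4 * √(α * ν m) / √((m - j + 1 : ℕ) : ℝ)) :=
        sum_le_sum fun j hj => mul_le_mul (hM j (mem_Icc.1 hj).2)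
          (clippedWeight_le hα hpos hmono (mem_Icc.1 hj).2 hgap)
          (clippedWeight_nonneg hα.le (hpos m).le) (by positivity)
    _ = C * (m : ℝ) ^ p *
          (3 * α * m + 4 * √(α * ν m) * ∑ j ∈ Icc 1 m, 1 / √((m - j + 1 : ℕ) : ℝ)) := by
        rw [← mul_sum, sum_add_distrib, sum_const, Nat.card_Icc, mul_sum]
        simp only [nsmul_eq_mul, Nat.add_sub_cancel, mul_one_div]
        ring
    _ ≤ C * (m : ℝ) ^ p * (3 * α * m + 4 * √(α * ν m) * (2 * √(m : ℝ))) := by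
        have := hpos m
        gcongr
        exact sum_Icc_one_div_sqrt_reflect_le m
    _ = C * (m : ℝ) ^ p * (3 * α * m + 8 * √(α * ν m) * √(m : ℝ)) := by ring

end clippedWeight

theorem multiplicity_weighted_sum_bound_general (ν : ℕ → ℝ) (M : ℕ → ℕ) (α C c₁ c₂ : ℝ) (n : ℕ)
    (hn : 2 ≤ n) (hα : 0 < α) (hC : 0 < C) (hc₁ : 0 < c₁)
    (hpos : ∀ m, 0 < ν m) (hmono : StrictMono ν)
    (hM : ∀ m, (M m : ℝ) ≤ C * (m : ℝ) ^ (n - 2))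
    (hlin : ∃ M₀, ∀ m ≥ M₀, c₁ * m ≤ ν m ∧ ν m ≤ c₂ * m)
    (hgap : ∃ M₀, ∀ m ≥ M₀, α * ν m ≤ ν m ^ 2 - ν (m - 1) ^ 2) :
    ∃ C' M₀, ∀ m ≥ M₀,
      ∑ j ∈ Finset.Icc 1 m,
          (M j : ℝ) *
            (if j = m then Real.sqrt (α * ν m)
             else min (Real.sqrt (α * ν m)) (2 * α * ν m / Real.sqrt (ν m ^ 2 - ν j ^ 2))) ≤
        C' * (m : ℝ) ^ (n - 1) := by
  obtain ⟨L₁, hlin⟩ := hlin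
  obtain ⟨L₂, hgap⟩ := hgap
  have hν : Tendsto ν atTop atTop :=
    tendsto_atTop_mono' _ (eventually_atTop.2 ⟨L₁, fun m hm => (hlin m hm).1⟩)
      (tendsto_natCast_atTop_atTop.const_mul_atTop hc₁)
  obtain ⟨N, hN⟩ := eventually_atTop.1 (hν.eventually_gt_atTop (2 * ν L₂))
  refine ⟨C * (3 * α + 8 * √(α * c₂)), max N L₁, fun m hm => ?_⟩
  have hgap' (k : ℕ) (hk : ν m < 2 * ν k) : α * ν k ≤ ν k ^ 2 - ν (k - 1) ^ 2 :=
    hgap k (hmono.lt_iff_lt.1 (by linarith [hN m (le_of_max_le_left hm)])).le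
  have hMm (j : ℕ) (hj : j ≤ m) : (M j : ℝ) ≤ C * (m : ℝ) ^ (n - 2) :=
    (hM j).trans (by gcongr)
  have hνm : √(α * ν m) ≤ √(α * c₂) * √(m : ℝ) := by
    rw [← Real.sqrt_mul' _ (Nat.cast_nonneg m), mul_assoc]
    exact Real.sqrt_le_sqrt (mul_le_mul_of_nonneg_left (hlin m (le_of_max_le_right hm)).2 hα.le)
  have hpow : (m : ℝ) ^ (n - 1) = (m : ℝ) ^ (n - 2) * m := by
    rw [← pow_succ]; congr 1; omega
  calc _ ≤ C * (m : ℝ) ^ (n - 2) * (3 * α * m + 8 * √(α * ν m) * √(m : ℝ)) :=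
        sum_mul_clippedWeight_le hα hC.le hpos hmono.monotone hgap' hMm
    _ ≤ C * (m : ℝ) ^ (n - 2) * (3 * α * m + 8 * (√(α * c₂) * √(m : ℝ)) * √(m : ℝ)) := by
        gcongr
    _ = C * (3 * α + 8 * √(α * c₂)) * (m : ℝ) ^ (n - 1) := by
        rw [hpow]
        linear_combination (8 * C * (m : ℝ) ^ (n - 2) * √(α * c₂)) *
          Real.mul_self_sqrt (Nat.cast_nonneg (α := ℝ) m)

/-- If `c₁ m ≤ ν_m ≤ c₂ m` for large `m`, multiplicities satisfy `M_m ≤ C m^{n-2}`, and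
`ν_m² - ν_{m-1}² ≥ α ν_m` for large `m`, then
`∑_{j=1}^m M_j · min(√(α ν_m), 2α ν_m (ν_m² - ν_j²)^{-1/2}) = O(m^{n-1})`
(where for `j = m` the first expression is used). -/
theorem multiplicity_weighted_sum_bound (ν : ℕ → ℝ) (M : ℕ → ℕ) (α C c₁ c₂ : ℝ) (n : ℕ)
    (hn : 2 ≤ n) (hα : 0 < α) (hC : 0 < C) (hc₁ : 0 < c₁) (hc₂ : 0 < c₂)
    (hpos : ∀ m, 0 < ν m) (hmono : StrictMono ν)
    (hM : ∀ m, (M m : ℝ) ≤ C * (m : ℝ) ^ (n - 2))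
    (hlin : ∃ M₀, ∀ m ≥ M₀, c₁ * m ≤ ν m ∧ ν m ≤ c₂ * m)
    (hgap : ∃ M₀, ∀ m ≥ M₀, α * ν m ≤ ν m ^ 2 - ν (m - 1) ^ 2) :
    ∃ C' M₀, ∀ m ≥ M₀,
      ∑ j ∈ Finset.Icc 1 m,
          (M j : ℝ) *
            (if j = m then Real.sqrt (α * ν m)
             else min (Real.sqrt (α * ν m)) (2 * α * ν m / Real.sqrt (ν m ^ 2 - ν j ^ 2))) ≤
        C' * (m : ℝ) ^ (n - 1) :=
  multiplicity_weighted_sum_bound_general ν M α C c₁ c₂ n hn hα hC hc₁ hpos hmono hM hlin hgap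
end
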